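/- Fix σ ∈ (0,1) and b ∈ (0,1) such that either (b ≤ 1/2 and b < (1−σ)/(2−σ)) or (b ≥ 1/2 and b > 1/(2−σ)). Then there exists a₁ > 0 such that for every a > a₁ the map f_{a,b,σ} : [0,1] → [0,1] is Li–Yorke chaotic: there exists an uncountable set S ⊆ [0,1] such that for every pair of distinct points x, y ∈ S, liminf_{n→∞} |f_{a,b,σ}ⁿ(x) − f_{a,b,σ}ⁿ(y)| = 0 and limsup_{n→∞} |f_{a,b,σ}ⁿ(x) − f_{a,b,σ}ⁿ(y)| > 0. -/

import Mathlib

open Real Filter Set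

/-- The EWA dynamics map `f_{a,b,σ}` on `[0,1]` (with `f(0) = 0`, `f(1) = 1`,
which this formula already satisfies for `σ ∈ (0,1)`). -/
noncomputable def f (a b σ x : ℝ) : ℝ :=
  x ^ (1 - σ) / (x ^ (1 - σ) + (1 - x) ^ (1 - σ) * Real.exp (a * (x - b)))


namespace LY

variable {a b σ : ℝ}

lemma den_pos (hσ : σ < 1) {x : ℝ} (hx : x ∈ Icc (0:ℝ) 1) :
    0 < x ^ (1 - σ) + (1 - x) ^ (1 - σ) * Real.exp (a * (x - b)) := by
  obtain ⟨h0, h1⟩ := hx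
  rcases eq_or_lt_of_le h0 with h | h
  · rw [← h]
    simp only [Real.zero_rpow (by linarith : (1:ℝ) - σ ≠ 0)]
    have : ((1:ℝ) - 0) ^ (1 - σ) = 1 := by norm_num
    rw [this]
    positivity
  · have : 0 < x ^ (1 - σ) := Real.rpow_pos_of_pos h _
    have h2 : 0 ≤ (1 - x) ^ (1 - σ) * Real.exp (a * (x - b)) := by
      apply mul_nonneg (Real.rpow_nonneg (by linarith) _) (Real.exp_pos _).le
    linarith

lemma f_mem (hσ : σ < 1) {x : ℝ} (hx : x ∈ Icc (0:ℝ) 1) :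
    f a b σ x ∈ Icc (0:ℝ) 1 := by
  have hd := den_pos (a := a) (b := b) hσ hx
  constructor
  · exact div_nonneg (Real.rpow_nonneg hx.1 _) hd.le
  · rw [f, div_le_one hd]
    have : 0 ≤ (1 - x) ^ (1 - σ) * Real.exp (a * (x - b)) := by
      apply mul_nonneg (Real.rpow_nonneg (by linarith [hx.2]) _) (Real.exp_pos _).le
    linarith

lemma f_mapsTo (hσ : σ < 1) : MapsTo (f a b σ) (Icc (0:ℝ) 1) (Icc (0:ℝ) 1) :=
  fun _ hx => f_mem hσ hx

lemma f_cont (hσ : σ < 1) : ContinuousOn (f a b σ) (Icc (0:ℝ) 1) := by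
  have h1 : Continuous (fun x : ℝ => x ^ (1 - σ)) := by
    rw [continuous_iff_continuousAt]
    intro x
    exact Real.continuousAt_rpow_const x _ (Or.inr (by linarith))
  have h2 : Continuous (fun x : ℝ => (1 - x) ^ (1 - σ)) :=
    h1.comp (continuous_const.sub continuous_id)
  have h3 : Continuous (fun x : ℝ => Real.exp (a * (x - b))) := by
    exact Real.continuous_exp.comp (continuous_const.mul (continuous_id.sub continuous_const))
  apply ContinuousOn.div (h1.continuousOn) ((h1.add (h2.mul h3)).continuousOn)
  intro x hx
  exact (den_pos hσ hx).ne'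

/-- `y ≤ f x` iff cross-multiplied inequality, for `x ∈ (0,1)`. -/
lemma le_f_iff (hσ : σ < 1) {x y : ℝ} (hx : x ∈ Ioo (0:ℝ) 1) :
    y ≤ f a b σ x ↔
      y * ((1 - x) ^ (1 - σ) * Real.exp (a * (x - b))) ≤ (1 - y) * x ^ (1 - σ) := by
  have hd := den_pos (a := a) (b := b) hσ (Ioo_subset_Icc_self hx)
  rw [f, le_div_iff₀ hd]
  constructor <;> intro h <;> nlinarith [h]

lemma f_le_iff (hσ : σ < 1) {x y : ℝ} (hx : x ∈ Ioo (0:ℝ) 1) :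
    f a b σ x ≤ y ↔
      (1 - y) * x ^ (1 - σ) ≤ y * ((1 - x) ^ (1 - σ) * Real.exp (a * (x - b))) := by
  have hd := den_pos (a := a) (b := b) hσ (Ioo_subset_Icc_self hx)
  rw [f, div_le_iff₀ hd]
  constructor <;> intro h <;> nlinarith [h]

lemma lt_f_iff (hσ : σ < 1) {x y : ℝ} (hx : x ∈ Ioo (0:ℝ) 1) :
    y < f a b σ x ↔
      y * ((1 - x) ^ (1 - σ) * Real.exp (a * (x - b))) < (1 - y) * x ^ (1 - σ) := by
  rw [← not_le, ← not_le, f_le_iff hσ hx]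

lemma f_lt_iff (hσ : σ < 1) {x y : ℝ} (hx : x ∈ Ioo (0:ℝ) 1) :
    f a b σ x < y ↔
      (1 - y) * x ^ (1 - σ) < y * ((1 - x) ^ (1 - σ) * Real.exp (a * (x - b))) := by
  rw [← not_le, ← not_le, le_f_iff hσ hx]

/-- upper bound: `f x ≤ (x/(1-x))^(1-σ) * exp (-(a*(x-b)))`. -/
lemma f_le_bound (hσ : σ < 1) {x : ℝ} (hx : x ∈ Ioo (0:ℝ) 1) :
    f a b σ x ≤ x ^ (1 - σ) / (1 - x) ^ (1 - σ) * Real.exp (-(a * (x - b))) := by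
  have hd := den_pos (a := a) (b := b) hσ (Ioo_subset_Icc_self hx)
  have hG : 0 < (1 - x) ^ (1 - σ) * Real.exp (a * (x - b)) :=
    mul_pos (Real.rpow_pos_of_pos (by linarith [hx.2]) _) (Real.exp_pos _)
  have hN : 0 ≤ x ^ (1 - σ) := Real.rpow_nonneg hx.1.le _
  calc f a b σ x ≤ x ^ (1 - σ) / ((1 - x) ^ (1 - σ) * Real.exp (a * (x - b))) := by
        apply div_le_div_of_nonneg_left hN hG
        nlinarith
    _ = x ^ (1 - σ) / (1 - x) ^ (1 - σ) * Real.exp (-(a * (x - b))) := by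
        rw [Real.exp_neg, div_mul_eq_div_div_swap, div_div]
        ring_nf

/-- lower bound: `1 - ((1-x)/x)^(1-σ) * exp (a*(x-b)) ≤ f x`. -/
lemma f_ge_bound (hσ : σ < 1) {x : ℝ} (hx : x ∈ Ioo (0:ℝ) 1) :
    1 - (1 - x) ^ (1 - σ) / x ^ (1 - σ) * Real.exp (a * (x - b)) ≤ f a b σ x := by
  have hN : 0 < x ^ (1 - σ) := Real.rpow_pos_of_pos hx.1 _
  rw [le_f_iff hσ hx]
  have hG : 0 ≤ (1 - x) ^ (1 - σ) * Real.exp (a * (x - b)) :=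
    mul_nonneg (Real.rpow_nonneg (by linarith [hx.2]) _) (Real.exp_pos _).le
  have key : (1 - x) ^ (1 - σ) / x ^ (1 - σ) * Real.exp (a * (x - b)) * x ^ (1 - σ)
      = (1 - x) ^ (1 - σ) * Real.exp (a * (x - b)) := by
    field_simp
  nlinarith [key]

end LY

namespace LY2

lemma iterate_contOn {F : ℝ → ℝ} (hF : ContinuousOn F (Icc 0 1))
    (hmaps : MapsTo F (Icc 0 1) (Icc 0 1)) (k : ℕ) :
    ContinuousOn (F^[k]) (Icc 0 1) := by
  induction k with
  | zero => simpa using continuousOn_id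
  | succ k ih =>
    rw [Function.iterate_succ']
    exact hF.comp ih (hmaps.iterate k)

/-- Itinerary lemma: given compact nonempty targets with covering, there is a point
whose iterates track the targets. -/
lemma itinerary {F : ℝ → ℝ} (hF : ContinuousOn F (Icc 0 1))
    (hmaps : MapsTo F (Icc 0 1) (Icc 0 1))
    (J : ℕ → Set ℝ) (hJcl : ∀ n, IsClosed (J n)) (hne : ∀ n, (J n).Nonempty)
    (hsub : ∀ n, J n ⊆ Icc 0 1) (hcov : ∀ n, J (n + 1) ⊆ F '' J n) :
    ∃ x, ∀ n, F^[n] x ∈ J n := by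
  have track : ∀ N m, ∃ x ∈ J m, ∀ k, k ≤ N → F^[k] x ∈ J (m + k) := by
    intro N
    induction N with
    | zero =>
      intro m
      obtain ⟨x, hx⟩ := hne m
      exact ⟨x, hx, fun k hk => by interval_cases k; simpa using hx⟩
    | succ N ih =>
      intro m
      obtain ⟨y, hy, hyk⟩ := ih (m + 1)
      obtain ⟨x, hxm, hxy⟩ := hcov m hy
      refine ⟨x, hxm, fun k hk => ?_⟩
      cases k with
      | zero => simpa using hxm
      | succ k =>
        have h1 : F^[k+1] x = F^[k] y := by rw [Function.iterate_succ_apply, hxy]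
        rw [h1]
        have := hyk k (by omega)
        convert this using 2
        omega
  set C : ℕ → Set ℝ :=
    fun N => ⋂ k ∈ Finset.range (N + 1), (Icc 0 1 ∩ F^[k] ⁻¹' J k) with hCdef
  have hCmem : ∀ N x, x ∈ C N ↔ ∀ k, k ≤ N → F^[k] x ∈ J k := by
    intro N x
    simp only [hCdef, Set.mem_iInter, Finset.mem_range, Set.mem_inter_iff, Set.mem_preimage]
    constructor
    · intro h k hk
      exact (h k (by omega)).2
    · intro h k hk
      refine ⟨?_, h k (by omega)⟩
      exact hsub 0 (by simpa using h 0 (by omega))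
  have hCne : ∀ N, (C N).Nonempty := by
    intro N
    obtain ⟨x, hx, hxk⟩ := track N 0
    exact ⟨x, (hCmem N x).2 (fun k hk => by simpa using hxk k hk)⟩
  have hCcl : ∀ N, IsClosed (C N) := by
    intro N
    apply isClosed_biInter
    intro k _
    exact (iterate_contOn hF hmaps k).preimage_isClosed_of_isClosed isClosed_Icc (hJcl k)
  have hCsub : ∀ N, C N ⊆ Icc 0 1 := by
    intro N x hx
    exact hsub 0 ((hCmem N x).1 hx 0 (by omega))
  have hCdec : ∀ N, C (N + 1) ⊆ C N := by
    intro N x hx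
    exact (hCmem N x).2 fun k hk => (hCmem (N+1) x).1 hx k (by omega)
  have hnon : (⋂ N, C N).Nonempty := by
    apply IsCompact.nonempty_iInter_of_sequence_nonempty_isCompact_isClosed C hCdec hCne
    · exact IsCompact.of_isClosed_subset isCompact_Icc (hCcl 0) (hCsub 0)
    · exact hCcl
  obtain ⟨x, hx⟩ := hnon
  refine ⟨x, fun n => ?_⟩
  have := Set.mem_iInter.1 hx n
  exact (hCmem n x).1 this n le_rfl

/-- An uncountable family of boolean sequences, pairwise differing infinitely often. -/
lemma uncountable_family :
    ∃ 𝒰 : Set (ℕ → Bool), ¬𝒰.Countable ∧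
      ∀ u ∈ 𝒰, ∀ v ∈ 𝒰, u ≠ v → ∃ᶠ m in atTop, u m ≠ v m := by
  classical
  let s : Setoid (ℕ → Bool) := ⟨fun u v => ∀ᶠ m in atTop, u m = v m, by
    refine ⟨fun u => Eventually.of_forall (fun _ => rfl), fun h => ?_, fun h1 h2 => ?_⟩
    · exact h.mono (fun m hm => hm.symm)
    · exact (h1.and h2).mono (fun m hm => hm.1.trans hm.2)⟩
  refine ⟨Set.range (Quotient.out (s := s)), ?_, ?_⟩
  · intro hcount
    -- then the quotient is countable, and so is (ℕ → Bool), contradiction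
    have h1 : Countable (Quotient s) := by
      have := hcount.to_subtype
      exact Function.Injective.countable
        (f := fun q : Quotient s => (⟨q.out, ⟨q, rfl⟩⟩ : Set.range (Quotient.out (s := s))))
        (fun q q' h => Quotient.out_injective (congrArg Subtype.val h))
    have h2 : ∀ q : Quotient s, ({v : ℕ → Bool | s.r v q.out}).Countable := by
      intro q
      have : {v : ℕ → Bool | s.r v q.out} ⊆
          ⋃ N : ℕ, Set.range (fun w : Fin N → Bool =>
            (fun m => if h : m < N then w ⟨m, h⟩ else q.out m : ℕ → Bool)) := by
        intro v hv
        simp only [Set.mem_setOf_eq] at hv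
        obtain ⟨N, hN⟩ := eventually_atTop.1 hv
        refine Set.mem_iUnion.2 ⟨N, ⟨fun i => v i, ?_⟩⟩
        funext m
        by_cases h : m < N
        · simp [h]
        · simp only [h, dif_neg, not_false_iff]
          exact (hN m (by omega)).symm
      exact Set.Countable.mono this (Set.countable_iUnion (fun N => Set.countable_range _))
    have h3 : Countable (ℕ → Bool) := by
      haveI := h1
      haveI : ∀ q : Quotient s, Countable {v : ℕ → Bool // s.r v q.out} := by
        intro q
        exact (h2 q).to_subtype
      exact Function.Injective.countable
        (f := fun u : ℕ → Bool =>
          (⟨⟦u⟧, ⟨u, Setoid.symm (Quotient.mk_out u)⟩⟩ :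
            Σ q : Quotient s, {v : ℕ → Bool // s.r v q.out}))
        (by
          intro u u' h
          simpa using congrArg (fun p : (Σ q : Quotient s, {v : ℕ → Bool // s.r v q.out}) =>
            (p.2 : {v // s.r v (p.1).out}).1) h)
    -- Cantor contradiction
    have hchi : Function.Injective (fun (A : Set ℕ) => (fun n => decide (n ∈ A) : ℕ → Bool)) := by
      intro A B h
      ext n
      have := congrFun h n
      simpa using this
    obtain ⟨e, he⟩ := Countable.exists_injective_nat (ℕ → Bool)
    exact Function.cantor_injective _ (he.comp hchi)
  · rintro u ⟨q, rfl⟩ v ⟨q', rfl⟩ huv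
    have : ¬ s.r q.out q'.out := by
      intro h
      exact huv (by
        have := Quotient.sound (s := s) h
        simpa [Quotient.out_eq] using congrArg Quotient.out this)
    change ¬ ∀ᶠ m in atTop, q.out m = q'.out m at this
    rw [Filter.not_eventually] at this
    exact this

end LY2
namespace LY3
open LY LY2

structure Setup (a b σ : ℝ) where
  e1 : ℝ
  w1 : ℝ
  xs : ℝ
  w2p : ℝ
  w2 : ℝ
  M : ℝ
  hσ1 : σ < 1
  hb0 : 0 < b
  hb2 : b < 1/2
  he1 : 0 < e1
  he1b : e1 < b/2
  hw1 : 3*b/4 ≤ w1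
  hw1xs : w1 < xs
  hxsw2p : xs < w2p
  hw2pw2 : w2p ≤ w2
  hw2M : w2 ≤ M
  hM1 : M < 1
  anti : AntitoneOn (f a b σ) (Icc w1 w2p)
  vw1 : f a b σ w1 = M
  vw2p : f a b σ w2p = b/8
  vw2 : f a b σ w2 = e1
  vxs : f a b σ xs = xs
  ve1 : f a b σ e1 ≤ w1
  vb2 : w2 ≤ f a b σ (b/2)
  expand1 : ∀ δ, 0 < δ → w1 ≤ xs - δ → xs + 2*δ ≤ w2p → xs + 2*δ ≤ f a b σ (xs - δ)
  expand2 : ∀ δ, 0 < δ → xs + δ ≤ w2p → w1 ≤ xs - 2*δ → f a b σ (xs + δ) ≤ xs - 2*δ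

variable {a b σ : ℝ}

namespace Setup

variable (S : Setup a b σ)

lemma w1_pos : 0 < S.w1 := lt_of_lt_of_le (by linarith [S.hb0] : (0:ℝ) < 3*b/4) S.hw1
lemma w2p_lt_one : S.w2p < 1 := lt_of_le_of_lt (S.hw2pw2.trans S.hw2M) S.hM1
lemma sub01 : Icc S.w1 S.w2 ⊆ Icc (0:ℝ) 1 :=
  Icc_subset_Icc S.w1_pos.le (by linarith [S.hw2M, S.hM1])
lemma subP : Icc S.e1 (b/2) ⊆ Icc (0:ℝ) 1 :=
  Icc_subset_Icc S.he1.le (by linarith [S.hb2])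
lemma w1_le_w2 : S.w1 ≤ S.w2 := by linarith [S.hw1xs, S.hxsw2p, S.hw2pw2]
lemma b2_le_M : b/2 ≤ S.M := by linarith [S.hw1, S.hw1xs, S.hxsw2p, S.hw2pw2, S.hw2M, S.hb0]

/-- key growth covering step -/
lemma grow (d : ℝ) (hd : 0 < d) :
    Icc (max S.w1 (S.xs - 2*d)) (min S.w2p (S.xs + 2*d)) ⊆
      f a b σ '' Icc (max S.w1 (S.xs - d)) (min S.w2p (S.xs + d)) := by
  set F := f a b σ
  have hl : max S.w1 (S.xs - d) ≤ S.xs := max_le (S.hw1xs.le) (by linarith)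
  have hr : S.xs ≤ min S.w2p (S.xs + d) := le_min (S.hxsw2p.le) (by linarith)
  have hlr : max S.w1 (S.xs - d) ≤ min S.w2p (S.xs + d) := hl.trans hr
  have hsub : Icc (max S.w1 (S.xs - d)) (min S.w2p (S.xs + d)) ⊆ Icc (0:ℝ) 1 := by
    apply Icc_subset_Icc
    · exact le_max_left _ _ |>.trans' S.w1_pos.le
    · exact (min_le_left _ _).trans S.w2p_lt_one.le
  have hcont : ContinuousOn F (Icc (max S.w1 (S.xs - d)) (min S.w2p (S.xs + d))) :=
    (f_cont S.hσ1).mono hsub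
  have hiv := intermediate_value_Icc' hlr hcont
  -- claim A : min w2p (xs + 2d) ≤ F (max w1 (xs - d))
  have claimA : min S.w2p (S.xs + 2*d) ≤ F (max S.w1 (S.xs - d)) := by
    rcases le_or_gt (S.xs - d) S.w1 with h | h
    · rw [max_eq_left h]
      rw [show F S.w1 = S.M from S.vw1]
      exact (min_le_left _ _).trans (S.hw2pw2.trans S.hw2M)
    · rw [max_eq_right h.le]
      rcases le_or_gt (S.xs + 2*d) S.w2p with h2 | h2
      · exact (min_le_right _ _).trans (S.expand1 d hd (by linarith) h2)
      · have hmin : min S.w2p (S.xs + 2*d) = S.w2p := min_eq_left h2.le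
        rw [hmin]
        set δ₀ := (S.w2p - S.xs)/2 with hδ₀
        have hδ₀pos : 0 < δ₀ := by simp only [hδ₀]; linarith [S.hxsw2p]
        have hδ₀d : δ₀ < d := by simp only [hδ₀] at *; linarith
        have he : S.xs + 2*δ₀ = S.w2p := by simp only [hδ₀]; ring
        have h1 : S.w2p ≤ F (S.xs - δ₀) := by
          rw [← he]
          exact S.expand1 δ₀ hδ₀pos (by linarith) (by linarith)
        have h2' : F (S.xs - d) ≥ F (S.xs - δ₀) := by
          apply S.anti
          · exact ⟨by linarith, by linarith [S.hxsw2p]⟩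
          · exact ⟨by linarith, by linarith [S.hxsw2p]⟩
          · linarith
        linarith
  -- claim B : F (min w2p (xs + d)) ≤ max w1 (xs - 2d)
  have claimB : F (min S.w2p (S.xs + d)) ≤ max S.w1 (S.xs - 2*d) := by
    rcases le_or_gt S.w2p (S.xs + d) with h | h
    · rw [min_eq_left h]
      rw [show F S.w2p = b/8 from S.vw2p]
      exact le_max_left _ _ |>.trans' (by linarith [S.hw1, S.hb0])
    · rw [min_eq_right h.le]
      rcases le_or_gt S.w1 (S.xs - 2*d) with h2 | h2
      · exact (S.expand2 d hd h.le h2).trans (le_max_right _ _)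
      · have hmax : max S.w1 (S.xs - 2*d) = S.w1 := max_eq_left h2.le
        rw [hmax]
        set δ₀ := (S.xs - S.w1)/2 with hδ₀
        have hδ₀pos : 0 < δ₀ := by simp only [hδ₀]; linarith [S.hw1xs]
        have hδ₀d : δ₀ < d := by simp only [hδ₀] at *; linarith
        have he : S.xs - 2*δ₀ = S.w1 := by simp only [hδ₀]; ring
        have h1 : F (S.xs + δ₀) ≤ S.w1 := by
          rw [← he]
          exact S.expand2 δ₀ hδ₀pos (by linarith) (by linarith [he])
        have h2' : F (S.xs + d) ≤ F (S.xs + δ₀) := by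
          apply S.anti
          · exact ⟨by linarith [S.hw1xs], by linarith⟩
          · exact ⟨by linarith [S.hw1xs], by linarith⟩
          · linarith
        linarith
  intro z hz
  apply hiv
  exact ⟨le_trans claimB hz.1, le_trans hz.2 claimA⟩

end Setup
end LY3
namespace LY4
open LY LY2 LY3

variable {a b σ : ℝ}

noncomputable def dst (S : Setup a b σ) : ℝ := min (S.xs - S.w1) (S.w2p - S.xs)

lemma dst_pos (S : Setup a b σ) : 0 < dst S :=
  lt_min (by linarith [S.hw1xs]) (by linarith [S.hxsw2p])

/-- lower endpoint of growth target -/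
noncomputable def Tlo (S : Setup a b σ) (m k : ℕ) : ℝ :=
  max S.w1 (S.xs - 2^k * (dst S / 2^m))

noncomputable def Thi (S : Setup a b σ) (m k : ℕ) : ℝ :=
  min S.w2p (S.xs + 2^k * (dst S / 2^m))

/-- schedule of (block, offset) pairs -/
def sched (B : ℕ) : ℕ → ℕ × ℕ
  | 0 => (0, 0)
  | n+1 =>
    let p := sched B n
    if p.2 < p.1 + B + 2 then (p.1, p.2 + 1) else (p.1 + 1, 0)

lemma sched_succ (B n : ℕ) :
    sched B (n+1) = if (sched B n).2 < (sched B n).1 + B + 2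
      then ((sched B n).1, (sched B n).2 + 1) else ((sched B n).1 + 1, 0) := rfl

lemma sched_inv (B : ℕ) : ∀ n, (sched B n).2 ≤ (sched B n).1 + B + 2 := by
  intro n
  induction n with
  | zero => simp [sched]
  | succ n ih =>
    rw [sched_succ]
    split
    · simpa using by omega
    · simp

lemma sched_fst_le (B : ℕ) : ∀ n, (sched B n).1 ≤ n := by
  intro n
  induction n with
  | zero => simp [sched]
  | succ n ih =>
    rw [sched_succ]
    split
    · simpa using by omega
    · simpa using by omega

lemma sched_add (B : ℕ) (m : ℕ) : ∀ k n, sched B n = (m, 0) → k ≤ m + B + 2 →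
    sched B (n + k) = (m, k) := by
  intro k
  induction k with
  | zero => intro n h _; simpa using h
  | succ k ih =>
    intro n h hk
    have h1 : sched B (n + k) = (m, k) := ih n h (by omega)
    have : n + (k+1) = (n + k) + 1 := by omega
    rw [this, sched_succ, h1]
    simp only []
    rw [if_pos (by omega)]

lemma sched_reach0 (B : ℕ) : ∀ m, ∃ n, sched B n = (m, 0) := by
  intro m
  induction m with
  | zero => exact ⟨0, rfl⟩
  | succ m ih =>
    obtain ⟨n, hn⟩ := ih
    have h1 : sched B (n + (m + B + 2)) = (m, m + B + 2) := sched_add B m _ n hn le_rfl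
    refine ⟨n + (m + B + 2) + 1, ?_⟩
    rw [sched_succ, h1]
    simp only []
    rw [if_neg (by omega)]

lemma sched_reach (B : ℕ) (m k : ℕ) (hk : k ≤ m + B + 2) :
    ∃ n, m ≤ n ∧ sched B n = (m, k) := by
  obtain ⟨n, hn⟩ := sched_reach0 B m
  refine ⟨n + k, ?_, sched_add B m k n hn hk⟩
  have := sched_fst_le B (n + k)
  rw [sched_add B m k n hn hk] at this
  omega

/-- The target set at a schedule position. -/
noncomputable def target (S : Setup a b σ) (B : ℕ) (u : ℕ → Bool) (p : ℕ × ℕ) : Set ℝ :=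
  if p.2 ≤ p.1 + B then Icc (Tlo S p.1 p.2) (Thi S p.1 p.2)
  else if p.2 = p.1 + B + 1 then Icc S.w1 S.w2
  else if u p.1 then Icc S.w1 S.w2 else Icc S.e1 (b/2)

lemma Tlo_le_xs (S : Setup a b σ) (m k : ℕ) : Tlo S m k ≤ S.xs := by
  apply max_le S.hw1xs.le
  have hd := dst_pos S
  have : (0:ℝ) ≤ 2^k * (dst S / 2^m) := by positivity
  linarith

lemma xs_le_Thi (S : Setup a b σ) (m k : ℕ) : S.xs ≤ Thi S m k := by
  apply le_min S.hxsw2p.le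
  have hd := dst_pos S
  have : (0:ℝ) ≤ 2^k * (dst S / 2^m) := by positivity
  linarith

lemma target_sub (S : Setup a b σ) (B : ℕ) (u : ℕ → Bool) (p : ℕ × ℕ) :
    target S B u p ⊆ Icc (0:ℝ) 1 := by
  rw [target]
  split
  · refine Icc_subset_Icc ?_ ?_
    · exact le_trans S.w1_pos.le (le_max_left _ _)
    · exact le_trans (min_le_left _ _) S.w2p_lt_one.le
  · split
    · exact S.sub01
    · split
      · exact S.sub01
      · exact S.subP

lemma target_closed (S : Setup a b σ) (B : ℕ) (u : ℕ → Bool) (p : ℕ × ℕ) :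
    IsClosed (target S B u p) := by
  rw [target]
  split
  · exact isClosed_Icc
  · split
    · exact isClosed_Icc
    · split <;> exact isClosed_Icc

lemma target_nonempty (S : Setup a b σ) (B : ℕ) (u : ℕ → Bool) (p : ℕ × ℕ) :
    (target S B u p).Nonempty := by
  rw [target]
  split
  · exact ⟨S.xs, Tlo_le_xs S _ _, xs_le_Thi S _ _⟩
  · split
    · exact ⟨S.w1, le_refl _, S.w1_le_w2⟩
    · split
      · exact ⟨S.w1, le_refl _, S.w1_le_w2⟩
      · exact ⟨S.e1, le_refl _, S.he1b.le⟩

/-- image of the W-interval covers `[e1, M]`. -/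
lemma covW (S : Setup a b σ) : Icc S.e1 S.M ⊆ f a b σ '' Icc S.w1 S.w2 := by
  have hcont : ContinuousOn (f a b σ) (Icc S.w1 S.w2) := (f_cont S.hσ1).mono S.sub01
  have := intermediate_value_Icc' S.w1_le_w2 hcont
  rw [S.vw1, S.vw2] at this
  exact this

/-- image of the W'-interval covers `[b/8, M]`. -/
lemma covW' (S : Setup a b σ) : Icc (b/8) S.M ⊆ f a b σ '' Icc S.w1 S.w2p := by
  have hsub : Icc S.w1 S.w2p ⊆ Icc (0:ℝ) 1 :=
    (Icc_subset_Icc le_rfl S.hw2pw2).trans S.sub01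
  have hcont : ContinuousOn (f a b σ) (Icc S.w1 S.w2p) := (f_cont S.hσ1).mono hsub
  have := intermediate_value_Icc' (by linarith [S.hw1xs, S.hxsw2p] : S.w1 ≤ S.w2p) hcont
  rw [S.vw1, S.vw2p] at this
  exact this

/-- image of the P-interval covers `[w1, w2]`. -/
lemma covP (S : Setup a b σ) : Icc S.w1 S.w2 ⊆ f a b σ '' Icc S.e1 (b/2) := by
  have hcont : ContinuousOn (f a b σ) (Icc S.e1 (b/2)) := (f_cont S.hσ1).mono S.subP
  have := intermediate_value_Icc S.he1b.le hcont
  intro z hz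
  apply this
  exact ⟨le_trans S.ve1 hz.1, le_trans hz.2 S.vb2⟩

end LY4
namespace LY4
open LY LY2 LY3

variable {a b σ : ℝ}

lemma pow_id (c : ℝ) (m B : ℕ) : (2:ℝ)^(m+B) * (c / 2^m) = 2^B * c := by
  rw [pow_add]
  field_simp

lemma e1_le_w1 (S : Setup a b σ) : S.e1 ≤ S.w1 := by
  have := S.he1b; have := S.hw1; have := S.hb0; linarith

lemma target_cover (S : Setup a b σ) (B : ℕ)
    (hB : max (S.xs - S.w1) (S.w2p - S.xs) ≤ 2^B * dst S) (u : ℕ → Bool) (n : ℕ) :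
    target S B u (sched B (n+1)) ⊆ f a b σ '' target S B u (sched B n) := by
  have hd0 := dst_pos S
  rcases hp : sched B n with ⟨m, k⟩
  have hinv : k ≤ m + B + 2 := by have := sched_inv B n; rw [hp] at this; exact this
  by_cases hk : k < m + B + 2
  · have hnext : sched B (n+1) = (m, k+1) := by
      rw [sched_succ, hp, if_pos (by simpa using hk)]
    rw [hnext]
    by_cases hk1 : k + 1 ≤ m + B
    · -- growth step
      simp only [target, if_pos hk1, if_pos (by omega : k ≤ m + B)]
      have hpow : Tlo S m (k+1) = max S.w1 (S.xs - 2*(2^k * (dst S / 2^m))) := by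
        rw [Tlo, pow_succ]
        ring_nf
      have hpow' : Thi S m (k+1) = min S.w2p (S.xs + 2*(2^k * (dst S / 2^m))) := by
        rw [Thi, pow_succ]
        ring_nf
      rw [hpow, hpow']
      exact S.grow _ (by positivity)
    · by_cases hk2 : k ≤ m + B
      · -- k = m + B : from W' to W
        have hkeq : k = m + B := by omega
        simp only [target, if_pos hk2, if_neg (by omega : ¬ (k+1 ≤ m+B)),
          if_pos (by omega : k+1 = m+B+1)]
        have hTlo : Tlo S m k = S.w1 := by
          rw [Tlo, hkeq]
          apply max_eq_left
          have h1 : S.xs - S.w1 ≤ 2^B * dst S := le_trans (le_max_left _ _) hB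
          have h2 : (2:ℝ)^(m+B) * (dst S / 2^m) = 2^B * dst S := pow_id _ m B
          linarith [h2 ▸ h1]
        have hThi : Thi S m k = S.w2p := by
          rw [Thi, hkeq]
          apply min_eq_left
          have h1 : S.w2p - S.xs ≤ 2^B * dst S := le_trans (le_max_right _ _) hB
          have h2 : (2:ℝ)^(m+B) * (dst S / 2^m) = 2^B * dst S := pow_id _ m B
          linarith [h2 ▸ h1]
        rw [hTlo, hThi]
        refine subset_trans ?_ (covW' S)
        apply Icc_subset_Icc
        · linarith [S.hw1, S.hb0]
        · exact S.hw2M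
      · -- k = m + B + 1 : from W to P or Q
        have hkeq : k = m + B + 1 := by omega
        simp only [target, if_neg (by omega : ¬ (k ≤ m+B)), if_pos hkeq,
          if_neg (by omega : ¬ (k+1 ≤ m+B)), if_neg (by omega : ¬ (k+1 = m+B+1))]
        refine subset_trans ?_ (covW S)
        split
        · exact Icc_subset_Icc (e1_le_w1 S) S.hw2M
        · exact Icc_subset_Icc le_rfl (S.b2_le_M)
  · -- k = m + B + 2 : from P/Q to next sync
    have hkeq : k = m + B + 2 := by omega
    have hnext : sched B (n+1) = (m+1, 0) := by
      rw [sched_succ, hp, if_neg (by simpa using hk)]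
    rw [hnext]
    simp only [target, if_pos (by omega : 0 ≤ m+1+B),
      if_neg (by omega : ¬ (k ≤ m+B)), if_neg (by omega : ¬ (k = m+B+1))]
    have hsub : Icc (Tlo S (m+1) 0) (Thi S (m+1) 0) ⊆ Icc S.w1 S.w2p :=
      Icc_subset_Icc (le_max_left _ _) (min_le_left _ _)
    split
    · -- from Q = [w1, w2]
      refine subset_trans (subset_trans hsub ?_) (covW S)
      exact Icc_subset_Icc (e1_le_w1 S) (S.hw2pw2.trans S.hw2M)
    · -- from P = [e1, b/2]
      refine subset_trans (subset_trans hsub ?_) (covP S)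
      exact Icc_subset_Icc le_rfl S.hw2pw2

/-- Width of sync target. -/
lemma sync_close (S : Setup a b σ) (B : ℕ) (u : ℕ → Bool) (m : ℕ) {z z' : ℝ}
    (hz : z ∈ target S B u (m, 0)) (hz' : z' ∈ target S B u (m, 0)) :
    |z - z'| ≤ 2 * (dst S / 2^m) := by
  have hd0 := dst_pos S
  simp only [target, if_pos (by omega : 0 ≤ m + B)] at hz hz'
  have h1 : S.xs - 2^0 * (dst S / 2^m) ≤ Tlo S m 0 := le_max_right _ _
  have h2 : Thi S m 0 ≤ S.xs + 2^0 * (dst S / 2^m) := min_le_right _ _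
  simp only [pow_zero, one_mul] at h1 h2
  rw [abs_sub_le_iff]
  constructor
  · linarith [hz.1, hz.2, hz'.1, hz'.2]
  · linarith [hz.1, hz.2, hz'.1, hz'.2]

/-- Separation at the choice slot. -/
lemma sep_far (S : Setup a b σ) (B : ℕ) (u v : ℕ → Bool) (m : ℕ) (huv : u m ≠ v m)
    {z z' : ℝ} (hz : z ∈ target S B u (m, m+B+2)) (hz' : z' ∈ target S B v (m, m+B+2)) :
    b/4 ≤ |z - z'| := by
  simp only [target, if_neg (by omega : ¬ (m+B+2 ≤ m+B)),
    if_neg (by omega : ¬ (m+B+2 = m+B+1))] at hz hz'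
  have hw1 := S.hw1
  have hb0 := S.hb0
  cases hum : u m <;> cases hvm : v m <;> rw [hum] at hz <;> rw [hvm] at hz' <;>
    simp only [if_true, if_false, Bool.false_eq_true] at hz hz'
  · exact absurd (hum.trans hvm.symm) huv
  · -- u m = false (P), v m = true (Q)
    rw [abs_sub_comm, abs_of_nonneg (by linarith [hz.2, hz'.1])]
    linarith [hz.2, hz'.1]
  · rw [abs_of_nonneg (by linarith [hz'.2, hz.1])]
    linarith [hz'.2, hz.1]
  · exact absurd (hum.trans hvm.symm) huv

end LY4
namespace LY4
open LY LY2 LY3 Filter Set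

variable {a b σ : ℝ}

lemma dyn (S : Setup a b σ) :
    ∃ T : Set ℝ, T ⊆ Icc 0 1 ∧ ¬T.Countable ∧
      ∀ x ∈ T, ∀ y ∈ T, x ≠ y →
        Filter.liminf (fun n => |(f a b σ)^[n] x - (f a b σ)^[n] y|) Filter.atTop = 0 ∧
        0 < Filter.limsup (fun n => |(f a b σ)^[n] x - (f a b σ)^[n] y|) Filter.atTop := by
  have hd0 := dst_pos S
  obtain ⟨B, hB⟩ := pow_unbounded_of_one_lt
    (max (S.xs - S.w1) (S.w2p - S.xs) / dst S) (one_lt_two (α := ℝ))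
  have hB' : max (S.xs - S.w1) (S.w2p - S.xs) ≤ 2^B * dst S := by
    rw [div_lt_iff₀ hd0] at hB
    linarith
  obtain ⟨𝒰, h𝒰c, h𝒰p⟩ := uncountable_family
  have hpt : ∀ u : ℕ → Bool, ∃ x, ∀ n, (f a b σ)^[n] x ∈ target S B u (sched B n) := by
    intro u
    exact itinerary (f_cont S.hσ1) (f_mapsTo S.hσ1) _
      (fun n => target_closed S B u _) (fun n => target_nonempty S B u _)
      (fun n => target_sub S B u _) (fun n => target_cover S B hB' u n)
  choose xpt hxpt using hpt
  have hinj : InjOn xpt 𝒰 := by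
    intro u hu v hv heq
    by_contra hne
    obtain ⟨m, -, hm⟩ := frequently_atTop.1 (h𝒰p u hu v hv hne) 0
    obtain ⟨n, -, hn⟩ := sched_reach B m (m+B+2) le_rfl
    have h1 := hxpt u n
    have h2 := hxpt v n
    rw [hn] at h1 h2
    rw [← heq] at h2
    have := sep_far S B u v m hm h1 h2
    simp only [sub_self, abs_zero] at this
    linarith [S.hb0]
  refine ⟨xpt '' 𝒰, ?_, ?_, ?_⟩
  · rintro x ⟨u, hu, rfl⟩
    have := hxpt u 0
    simp only [Function.iterate_zero_apply] at this
    exact target_sub S B u _ this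
  · intro hc
    exact h𝒰c (Set.countable_of_injective_of_countable_image hinj hc)
  · rintro x ⟨u, hu, rfl⟩ y ⟨v, hv, rfl⟩ hxy
    have hne : u ≠ v := fun h => hxy (by rw [h])
    set A : ℕ → ℝ := fun n => |(f a b σ)^[n] (xpt u) - (f a b σ)^[n] (xpt v)| with hA
    have hA0 : ∀ n, 0 ≤ A n := fun n => abs_nonneg _
    have hA1 : ∀ n, A n ≤ 1 := by
      intro n
      have h1 := target_sub S B u _ (hxpt u n)
      have h2 := target_sub S B v _ (hxpt v n)
      rw [hA]
      rw [abs_sub_le_iff]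
      constructor
      · linarith [h1.1, h1.2, h2.1, h2.2]
      · linarith [h1.1, h1.2, h2.1, h2.2]
    have hbdd_le : IsBoundedUnder (· ≤ ·) atTop A := isBoundedUnder_of ⟨1, hA1⟩
    have hbdd_ge : IsBoundedUnder (· ≥ ·) atTop A := isBoundedUnder_of ⟨0, hA0⟩
    have hfreq : ∀ ε : ℝ, 0 < ε → ∃ᶠ n in atTop, A n ≤ ε := by
      intro ε hε
      rw [frequently_atTop]
      intro N
      obtain ⟨m₀, hm₀⟩ := pow_unbounded_of_one_lt (2 * dst S / ε) (one_lt_two (α := ℝ))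
      obtain ⟨n, hmn, hn⟩ := sched_reach B (max m₀ N) 0 (by omega)
      refine ⟨n, le_trans (le_max_right _ _) hmn, ?_⟩
      have h1 := hxpt u n
      have h2 := hxpt v n
      rw [hn] at h1 h2
      have heqt : target S B v (max m₀ N, 0) = target S B u (max m₀ N, 0) := by
        simp only [target, if_pos (by omega : 0 ≤ max m₀ N + B)]
      rw [heqt] at h2
      have hclose := sync_close S B u (max m₀ N) h1 h2
      have hm' : (2:ℝ)^m₀ ≤ 2^(max m₀ N) := by
        apply pow_le_pow_right₀ one_le_two (le_max_left _ _)
      have h2m : (0:ℝ) < 2^(max m₀ N) := by positivity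
      have : 2 * (dst S / 2^(max m₀ N)) ≤ ε := by
        rw [div_lt_iff₀ hε] at hm₀
        rw [mul_div_assoc'] at *
        rw [div_le_iff₀ h2m]
        nlinarith
      linarith [hclose]
    constructor
    · apply le_antisymm
      · apply le_of_forall_pos_le_add
        intro ε hε
        have := Filter.liminf_le_of_frequently_le (hfreq ε hε) hbdd_ge
        simpa using this
      · exact Filter.le_liminf_of_le hbdd_le.isCoboundedUnder_ge (Eventually.of_forall hA0)
    · have hfreq2 : ∃ᶠ n in atTop, b/4 ≤ A n := by
        rw [frequently_atTop]
        intro N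
        obtain ⟨m, hmN, hm⟩ := frequently_atTop.1 (h𝒰p u hu v hv hne) N
        obtain ⟨n, hmn, hn⟩ := sched_reach B m (m+B+2) le_rfl
        refine ⟨n, le_trans hmN hmn, ?_⟩
        have h1 := hxpt u n
        have h2 := hxpt v n
        rw [hn] at h1 h2
        exact sep_far S B u v m hm h1 h2
      have := Filter.le_limsup_of_frequently_le hfreq2 hbdd_le
      linarith [S.hb0]

end LY4
namespace LY5
open LY Real Filter Set

variable {a b σ : ℝ}

lemma logd {u v : ℝ} (hv : 0 < v) (huv : v ≤ u) : log u - log v ≤ (u - v)/v := by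
  have hu : 0 < u := lt_of_lt_of_le hv huv
  have h : log (u/v) ≤ u/v - 1 := log_le_sub_one_of_pos (by positivity)
  rw [log_div hu.ne' hv.ne'] at h
  have : u/v - 1 = (u - v)/v := by field_simp
  linarith [this ▸ h]

lemma logd_nonneg {u v : ℝ} (hv : 0 < v) (huv : v ≤ u) : 0 ≤ log u - log v := by
  have := Real.log_le_log hv huv
  linarith

lemma logd_le {u v t : ℝ} (hv : 0 < v) (huv : v ≤ u) (h : (u - v)/v ≤ t) :
    log u - log v ≤ t := (logd hv huv).trans h

/-- strict antitonicity on `[lo, hi]` for large `a`. -/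
lemma anti_lemma (hσ : σ ∈ Ioo (0:ℝ) 1) {lo hi : ℝ} (hlo : 0 < lo) (hhi : hi < 1)
    (ha : (1-σ)*(1/lo + 1/(1-hi)) < a) :
    StrictAntiOn (f a b σ) (Icc lo hi) := by
  intro x hx y hy hxy
  have hx0 : 0 < x := lt_of_lt_of_le hlo hx.1
  have hy0 : 0 < y := lt_of_lt_of_le hlo hy.1
  have hx1 : x < 1 := lt_of_le_of_lt hx.2 hhi
  have hy1 : y < 1 := lt_of_le_of_lt hy.2 hhi
  have h1x : 0 < 1 - x := by linarith
  have h1y : 0 < 1 - y := by linarith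
  have hσ1 : σ < 1 := hσ.2
  have hσ0 : 0 < σ := hσ.1
  -- key log inequality
  have k1 : log y - log x ≤ (y - x) * (1/lo) := by
    apply logd_le hx0 hxy.le
    rw [div_le_iff₀ hx0]
    have h1 : (y - x) * (1/lo) * x = (y-x) * (x/lo) := by ring
    rw [h1]
    have h2 : (1:ℝ) ≤ x/lo := (one_le_div hlo).2 hx.1
    nlinarith [sub_pos.2 hxy]
  have k2 : log (1-x) - log (1-y) ≤ (y - x) * (1/(1-hi)) := by
    apply logd_le h1y (by linarith)
    rw [div_le_iff₀ h1y]
    have h2 : (1:ℝ) ≤ (1-y)/(1-hi) := (one_le_div (by linarith)).2 (by linarith [hy.2])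
    have h3 : (y - x) * (1/(1-hi)) * (1-y) = (y-x) * ((1-y)/(1-hi)) := by ring
    rw [h3]
    nlinarith [sub_pos.2 hxy]
  have key : (1-σ)*((log y - log x) + (log (1-x) - log (1-y))) < a * (y - x) := by
    have hyx : 0 < y - x := sub_pos.2 hxy
    nlinarith [k1, k2, hyx]
  -- products
  have hNx : 0 < x ^ (1-σ) := rpow_pos_of_pos hx0 _
  have hNy : 0 < y ^ (1-σ) := rpow_pos_of_pos hy0 _
  have hGx : 0 < (1-x) ^ (1-σ) * Real.exp (a*(x-b)) :=
    mul_pos (rpow_pos_of_pos h1x _) (exp_pos _)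
  have hGy : 0 < (1-y) ^ (1-σ) * Real.exp (a*(y-b)) :=
    mul_pos (rpow_pos_of_pos h1y _) (exp_pos _)
  have hprod : y ^ (1-σ) * ((1-x) ^ (1-σ) * Real.exp (a*(x-b)))
      < x ^ (1-σ) * ((1-y) ^ (1-σ) * Real.exp (a*(y-b))) := by
    have hL : (0:ℝ) < y ^ (1-σ) * ((1-x) ^ (1-σ) * Real.exp (a*(x-b))) := by positivity
    have hR : (0:ℝ) < x ^ (1-σ) * ((1-y) ^ (1-σ) * Real.exp (a*(y-b))) := by positivity
    rw [← Real.exp_log hL, ← Real.exp_log hR, Real.exp_lt_exp]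
    rw [Real.log_mul hNy.ne' hGx.ne', Real.log_mul (rpow_pos_of_pos h1x _).ne' (exp_pos _).ne',
      Real.log_mul hNx.ne' hGy.ne', Real.log_mul (rpow_pos_of_pos h1y _).ne' (exp_pos _).ne',
      Real.log_rpow hy0, Real.log_rpow hx0, Real.log_rpow h1x, Real.log_rpow h1y,
      Real.log_exp, Real.log_exp]
    nlinarith [key]
  -- conclude
  have hDx := LY.den_pos (a := a) (b := b) hσ1 ⟨hx0.le, hx1.le⟩
  have hDy := LY.den_pos (a := a) (b := b) hσ1 ⟨hy0.le, hy1.le⟩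
  rw [f, f, div_lt_div_iff₀ hDy hDx]
  nlinarith [hprod, hNx, hNy]

/-- fixed point identity in log form -/
lemma fix_log (hσ : σ ∈ Ioo (0:ℝ) 1) {xs : ℝ} (hxs : xs ∈ Ioo (0:ℝ) 1)
    (hfix : f a b σ xs = xs) :
    a * (xs - b) = σ * (log (1 - xs) - log xs) := by
  have hσ1 : σ < 1 := hσ.2
  have hx0 := hxs.1
  have h1x : 0 < 1 - xs := by linarith [hxs.2]
  have h1 : xs * ((1 - xs) ^ (1-σ) * Real.exp (a*(xs-b))) = (1 - xs) * xs ^ (1-σ) := by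
    have hle : xs ≤ f a b σ xs := le_of_eq hfix.symm
    have hge : f a b σ xs ≤ xs := le_of_eq hfix
    have h2 := (LY.le_f_iff hσ1 hxs).1 hle
    have h3 := (LY.f_le_iff hσ1 hxs).1 hge
    nlinarith [h2, h3]
  have hL : (0:ℝ) < xs * ((1 - xs) ^ (1-σ) * Real.exp (a*(xs-b))) := by positivity
  have hR : (0:ℝ) < (1 - xs) * xs ^ (1-σ) := by positivity
  have := congrArg Real.log h1
  rw [Real.log_mul hx0.ne' (by positivity), Real.log_mul (by positivity : ((1-xs)^(1-σ) : ℝ) ≠ 0) (exp_pos _).ne',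
    Real.log_mul h1x.ne' (by positivity), Real.log_rpow h1x, Real.log_rpow hx0,
    Real.log_exp] at this
  nlinarith [this]

end LY5
namespace LY5
open LY Real Filter Set

variable {a b σ : ℝ}

set_option maxHeartbeats 1000000 in
lemma expand1_lemma (hσ : σ ∈ Ioo (0:ℝ) 1) {xs w1 w2p m₀ : ℝ} (hb0 : 0 < b)
    (hw1 : 3*b/4 ≤ w1) (hw1xs : w1 < xs) (hxsw2p : xs < w2p) (hw2p : w2p ≤ 1 - m₀)
    (hxsM : xs ≤ 1 - 2*m₀) (hm₀ : 0 < m₀)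
    (hfix : a * (xs - b) = σ * (log (1 - xs) - log xs))
    (ha : 5/b + 3/m₀ ≤ a) :
    ∀ δ, 0 < δ → w1 ≤ xs - δ → xs + 2*δ ≤ w2p → xs + 2*δ ≤ f a b σ (xs - δ) := by
  intro δ hδ hL hR
  have hσ0 := hσ.1
  have hσ1 := hσ.2
  set x := xs - δ with hxdef
  set y := xs + 2*δ with hydef
  have hx0 : 0 < x := by simp only [hxdef]; nlinarith
  have hxs0 : 0 < xs := by nlinarith
  have hx1 : x < 1 := by simp only [hxdef]; nlinarith
  have hy0 : 0 < y := by simp only [hydef]; nlinarith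
  have hy1 : y < 1 := by simp only [hydef]; nlinarith
  have h1x : 0 < 1 - x := by linarith
  have h1y : 0 < 1 - y := by linarith
  have h1xs : 0 < 1 - xs := by nlinarith
  rw [LY.le_f_iff hσ1 ⟨hx0, hx1⟩]
  have hLpos : (0:ℝ) < y * ((1 - x) ^ (1-σ) * Real.exp (a*(x-b))) := by positivity
  have hRpos : (0:ℝ) < (1 - y) * x ^ (1-σ) := by positivity
  rw [← Real.exp_log hLpos, ← Real.exp_log hRpos, Real.exp_le_exp]
  rw [Real.log_mul hy0.ne' (by positivity), Real.log_mul (by positivity : ((1-x)^(1-σ):ℝ) ≠ 0) (exp_pos _).ne',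
    Real.log_mul h1y.ne' (by positivity), Real.log_rpow h1x, Real.log_rpow hx0, Real.log_exp]
  have hax : a * (x - b) = σ * (log (1 - xs) - log xs) - a * δ := by
    simp only [hxdef]
    have : a * (xs - δ - b) = a * (xs - b) - a * δ := by ring
    rw [this, hfix]
  rw [hax]
  -- the four log-difference bounds
  have d1 : log y - log xs ≤ (3/b) * δ := by
    apply logd_le hxs0 (by simp only [hydef]; linarith)
    rw [div_le_iff₀ hxs0]
    have h34 : 3*b/4 ≤ xs := by linarith
    have hb' : (3/b) * δ * xs ≥ (3/b) * δ * (3*b/4) := by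
      apply mul_le_mul_of_nonneg_left h34 (by positivity)
    have : (3/b) * δ * (3*b/4) = (9/4) * δ := by field_simp; ring
    simp only [hydef]
    nlinarith
  have d2 : log (1 - xs) - log (1 - y) ≤ (2/m₀) * δ := by
    apply logd_le h1y (by simp only [hydef]; linarith)
    rw [div_le_iff₀ h1y]
    have hm : m₀ ≤ 1 - y := by simp only [hydef]; linarith
    have : (2/m₀) * δ * (1-y) ≥ (2/m₀) * δ * m₀ := by
      apply mul_le_mul_of_nonneg_left hm (by positivity)
    have h2 : (2/m₀) * δ * m₀ = 2 * δ := by field_simp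
    simp only [hydef]
    nlinarith
  have d3 : (1-σ) * (log (1-x) - log (1-xs)) ≤ (1/m₀) * δ := by
    have hnn : 0 ≤ log (1-x) - log (1-xs) := logd_nonneg h1xs (by simp only [hxdef]; linarith)
    have hbd : log (1-x) - log (1-xs) ≤ (1/m₀) * δ := by
      apply logd_le h1xs (by simp only [hxdef]; linarith)
      rw [div_le_iff₀ h1xs]
      have hm : 2*m₀ ≤ 1 - xs := by linarith
      have : (1/m₀) * δ * (1 - xs) ≥ (1/m₀) * δ * (2*m₀) := by
        apply mul_le_mul_of_nonneg_left hm (by positivity)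
      have h2 : (1/m₀) * δ * (2*m₀) = 2 * δ := by field_simp
      simp only [hxdef]
      nlinarith
    nlinarith
  have d4 : (1-σ) * (log xs - log x) ≤ (2/b) * δ := by
    have hnn : 0 ≤ log xs - log x := logd_nonneg hx0 (by simp only [hxdef]; linarith)
    have hbd : log xs - log x ≤ (2/b) * δ := by
      apply logd_le hx0 (by simp only [hxdef]; linarith)
      rw [div_le_iff₀ hx0]
      have h34 : 3*b/4 ≤ x := by simp only [hxdef]; linarith
      have : (2/b) * δ * x ≥ (2/b) * δ * (3*b/4) := by
        apply mul_le_mul_of_nonneg_left h34 (by positivity)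
      have h2 : (2/b) * δ * (3*b/4) = (3/2) * δ := by field_simp; ring
      simp only [hxdef]
      nlinarith
    nlinarith
  -- combine
  have hsum : (3/b)*δ + (2/m₀)*δ + (1/m₀)*δ + (2/b)*δ ≤ a * δ := by
    have : (3/b)*δ + (2/m₀)*δ + (1/m₀)*δ + (2/b)*δ = (5/b + 3/m₀) * δ := by ring
    rw [this]
    exact mul_le_mul_of_nonneg_right ha hδ.le
  linarith [d1, d2, d3, d4, hsum]

set_option maxHeartbeats 1000000 in
lemma expand2_lemma (hσ : σ ∈ Ioo (0:ℝ) 1) {xs w1 w2p m₀ : ℝ} (hb0 : 0 < b)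
    (hw1 : 3*b/4 ≤ w1) (hw1xs : w1 < xs) (hxsw2p : xs < w2p) (hw2p : w2p ≤ 1 - m₀)
    (hxsM : xs ≤ 1 - 2*m₀) (hm₀ : 0 < m₀)
    (hfix : a * (xs - b) = σ * (log (1 - xs) - log xs))
    (ha : 5/b + 3/m₀ ≤ a) :
    ∀ δ, 0 < δ → xs + δ ≤ w2p → w1 ≤ xs - 2*δ → f a b σ (xs + δ) ≤ xs - 2*δ := by
  intro δ hδ hR hL
  have hσ0 := hσ.1
  have hσ1 := hσ.2
  set x := xs + δ with hxdef
  set y := xs - 2*δ with hydef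
  have hxs0 : 0 < xs := by nlinarith
  have hx0 : 0 < x := by simp only [hxdef]; nlinarith
  have hx1 : x < 1 := by simp only [hxdef]; nlinarith
  have hy0 : 0 < y := by simp only [hydef]; nlinarith
  have hy1 : y < 1 := by simp only [hydef]; nlinarith
  have h1x : 0 < 1 - x := by linarith
  have h1y : 0 < 1 - y := by linarith
  have h1xs : 0 < 1 - xs := by nlinarith
  rw [LY.f_le_iff hσ1 ⟨hx0, hx1⟩]
  have hLpos : (0:ℝ) < (1 - y) * x ^ (1-σ) := by positivity
  have hRpos : (0:ℝ) < y * ((1 - x) ^ (1-σ) * Real.exp (a*(x-b))) := by positivity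
  rw [← Real.exp_log hLpos, ← Real.exp_log hRpos, Real.exp_le_exp]
  rw [Real.log_mul hy0.ne' (by positivity), Real.log_mul (by positivity : ((1-x)^(1-σ):ℝ) ≠ 0) (exp_pos _).ne',
    Real.log_mul h1y.ne' (by positivity), Real.log_rpow h1x, Real.log_rpow hx0, Real.log_exp]
  have hax : a * (x - b) = σ * (log (1 - xs) - log xs) + a * δ := by
    simp only [hxdef]
    have : a * (xs + δ - b) = a * (xs - b) + a * δ := by ring
    rw [this, hfix]
  rw [hax]
  have d1 : log (1-y) - log (1-xs) ≤ (1/m₀) * δ := by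
    apply logd_le h1xs (by simp only [hydef]; linarith)
    rw [div_le_iff₀ h1xs]
    have hm : 2*m₀ ≤ 1 - xs := by linarith
    have : (1/m₀) * δ * (1 - xs) ≥ (1/m₀) * δ * (2*m₀) := by
      apply mul_le_mul_of_nonneg_left hm (by positivity)
    have h2 : (1/m₀) * δ * (2*m₀) = 2 * δ := by field_simp
    simp only [hydef]
    nlinarith
  have d2 : log xs - log y ≤ (3/b) * δ := by
    apply logd_le hy0 (by simp only [hydef]; linarith)
    rw [div_le_iff₀ hy0]
    have h34 : 3*b/4 ≤ y := by simp only [hydef]; linarith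
    have : (3/b) * δ * y ≥ (3/b) * δ * (3*b/4) := by
      apply mul_le_mul_of_nonneg_left h34 (by positivity)
    have h2 : (3/b) * δ * (3*b/4) = (9/4) * δ := by field_simp; ring
    simp only [hydef]
    nlinarith
  have d3 : (1-σ) * (log x - log xs) ≤ (2/b) * δ := by
    have hnn : 0 ≤ log x - log xs := logd_nonneg hxs0 (by simp only [hxdef]; linarith)
    have hbd : log x - log xs ≤ (2/b) * δ := by
      apply logd_le hxs0 (by simp only [hxdef]; linarith)
      rw [div_le_iff₀ hxs0]
      have h34 : 3*b/4 ≤ xs := by linarith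
      have : (2/b) * δ * xs ≥ (2/b) * δ * (3*b/4) := by
        apply mul_le_mul_of_nonneg_left h34 (by positivity)
      have h2 : (2/b) * δ * (3*b/4) = (3/2) * δ := by field_simp; ring
      simp only [hxdef]
      nlinarith
    nlinarith
  have d4 : (1-σ) * (log (1-xs) - log (1-x)) ≤ (2/m₀) * δ := by
    have hnn : 0 ≤ log (1-xs) - log (1-x) := logd_nonneg h1x (by simp only [hxdef]; linarith)
    have hbd : log (1-xs) - log (1-x) ≤ (2/m₀) * δ := by
      apply logd_le h1x (by simp only [hxdef]; linarith)
      rw [div_le_iff₀ h1x]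
      have hm : m₀ ≤ 1 - x := by simp only [hxdef]; linarith
      have : (2/m₀) * δ * (1-x) ≥ (2/m₀) * δ * m₀ := by
        apply mul_le_mul_of_nonneg_left hm (by positivity)
      have h2 : (2/m₀) * δ * m₀ = 2 * δ := by field_simp
      simp only [hxdef]
      nlinarith
    nlinarith
  have hsum : (1/m₀)*δ + (3/b)*δ + (2/b)*δ + (2/m₀)*δ ≤ a * δ := by
    have : (1/m₀)*δ + (3/b)*δ + (2/b)*δ + (2/m₀)*δ = (5/b + 3/m₀) * δ := by ring
    rw [this]
    exact mul_le_mul_of_nonneg_right ha hδ.le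
  linarith [d1, d2, d3, d4, hsum]

end LY5
namespace LY5
open LY LY3 Real Filter Set

variable {b σ : ℝ}

lemma ev_exp (C k c : ℝ) (hk : 0 < k) (hc : 0 < c) :
    ∀ᶠ a in atTop, C * Real.exp (-(a*k)) < c := by
  have h2 : Tendsto (fun x : ℝ => x * k) atTop atTop :=
    Tendsto.atTop_mul_const hk tendsto_id
  have h1 : Tendsto (fun x : ℝ => C * Real.exp (-(x*k))) atTop (nhds (C * 0)) :=
    Tendsto.const_mul C (Real.tendsto_exp_neg_atTop_nhds_zero.comp h2)
  rw [mul_zero] at h1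
  exact h1.eventually_lt_const hc

set_option maxHeartbeats 4000000 in
lemma setup_exists (hσ : σ ∈ Ioo (0:ℝ) 1) (hb : b ∈ Ioo (0:ℝ) 1)
    (hcase : b * (2-σ) < 1-σ) :
    ∀ᶠ a in Filter.atTop, Nonempty (LY3.Setup a b σ) := by
  obtain ⟨hσ0, hσ1⟩ := hσ
  obtain ⟨hb0, hb1⟩ := hb
  have h1σ : 0 < 1 - σ := by linarith
  have hkey : b < (1-b)*(1-σ) := by nlinarith
  have hb2 : b < 1/2 := by nlinarith
  obtain ⟨c, hcdef⟩ : ∃ x : ℝ, x = b + b/(1-σ) := ⟨_, rfl⟩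
  have hbσ0 : 0 < b/(1-σ) := by positivity
  have hc1 : c < 1 := by
    have : b/(1-σ) < 1 - b := (div_lt_iff₀ h1σ).2 (by nlinarith)
    rw [hcdef]; linarith
  have hc0 : 0 < c := by rw [hcdef]; positivity
  obtain ⟨m₀, hm₀def⟩ : ∃ x : ℝ, x = (1 - c)/4 := ⟨_, rfl⟩
  have hm₀ : 0 < m₀ := by rw [hm₀def]; linarith
  have hm₀4 : m₀ ≤ 1/4 := by rw [hm₀def]; linarith
  obtain ⟨M, hMdef⟩ : ∃ x : ℝ, x = 1 - 2*m₀ := ⟨_, rfl⟩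
  have hM2 : 1/2 ≤ M := by rw [hMdef]; linarith
  have hM1 : M < 1 := by rw [hMdef]; linarith
  obtain ⟨θ, hθdef⟩ : ∃ x : ℝ, x = b/(1-σ) + m₀ := ⟨_, rfl⟩
  have hθ0 : 0 < θ := by rw [hθdef]; positivity
  have hMb : M - b = b/(1-σ) + 2*m₀ := by rw [hMdef, hm₀def, hcdef]; ring
  have hθσ : θ * (1-σ) = b + (1-σ)*m₀ := by
    rw [hθdef]
    field_simp
  filter_upwards [eventually_gt_atTop ((1-σ)*(1/(b/2) + 1/m₀)),
    ev_exp (2/b) (b/4) (2*m₀) (by positivity) (by positivity),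
    ev_exp (1/m₀) m₀ 1 hm₀ one_pos,
    ev_exp 2 ((1-σ)*m₀) (b/2) (by positivity) (by positivity),
    ev_exp 1 θ (b/8) hθ0 (by positivity),
    eventually_ge_atTop (5/b + 3/m₀),
    eventually_gt_atTop 0] with a ha1 ha2 ha3 ha4 ha5 ha6 ha7
  set F := f a b σ with hFdef
  obtain ⟨e1, he1def⟩ : ∃ x : ℝ, x = Real.exp (-(a*θ)) := ⟨_, rfl⟩
  have he1 : 0 < e1 := he1def ▸ exp_pos _
  have he1b8 : e1 < b/8 := by
    rw [he1def]
    have := ha5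
    rw [one_mul] at this
    exact this
  -- C2 : on [b/2, 3b/4] the map is above M
  have hC2 : ∀ z, b/2 ≤ z → z ≤ 3*b/4 → M < F z := by
    intro z hz1 hz2
    have hz0 : 0 < z := by linarith
    have hz5 : z < 1/2 := by linarith
    have hz1' : z < 1 := by linarith
    have hzIoo : z ∈ Ioo (0:ℝ) 1 := ⟨hz0, hz1'⟩
    have hlow := LY.f_ge_bound (a := a) (b := b) hσ1 hzIoo
    have hratio : (1-z) ^ (1-σ) / z ^ (1-σ) ≤ 2/b := by
      have h1 : (1-z) ^ (1-σ) / z ^ (1-σ) = ((1-z)/z) ^ (1-σ) := by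
        rw [Real.div_rpow (by linarith) hz0.le]
      rw [h1]
      have hbase : 1 ≤ (1-z)/z := by
        rw [le_div_iff₀ hz0]; linarith
      have h2 : ((1-z)/z) ^ (1-σ) ≤ ((1-z)/z) ^ (1:ℝ) :=
        Real.rpow_le_rpow_of_exponent_le hbase (by linarith)
      rw [Real.rpow_one] at h2
      have h3 : (1-z)/z ≤ 2/b := by
        rw [div_le_div_iff₀ hz0 hb0]
        nlinarith
      linarith
    have hexp : Real.exp (a*(z-b)) ≤ Real.exp (-(a*(b/4))) := by
      rw [Real.exp_le_exp]
      nlinarith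
    have hprod : (1-z) ^ (1-σ) / z ^ (1-σ) * Real.exp (a*(z-b)) ≤ (2/b) * Real.exp (-(a*(b/4))) := by
      apply mul_le_mul hratio hexp (Real.exp_pos _).le (by positivity)
    have := ha2
    calc M = 1 - 2*m₀ := hMdef
      _ < 1 - (1-z) ^ (1-σ) / z ^ (1-σ) * Real.exp (a*(z-b)) := by linarith
      _ ≤ F z := hlow
  -- C3 : on [M, 1-m₀] the map is below e1
  have hC3 : ∀ z, M ≤ z → z ≤ 1 - m₀ → F z < e1 := by
    intro z hz1 hz2
    have hz0 : 0 < z := by linarith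
    have hz1' : z < 1 := by linarith
    have h1z : 0 < 1 - z := by linarith
    have hup := LY.f_le_bound (a := a) (b := b) hσ1 ⟨hz0, hz1'⟩
    have hratio : z ^ (1-σ) / (1-z) ^ (1-σ) ≤ 1/m₀ := by
      have h1 : z ^ (1-σ) / (1-z) ^ (1-σ) = (z/(1-z)) ^ (1-σ) := by
        rw [Real.div_rpow hz0.le (by linarith)]
      rw [h1]
      have hbase : 1 ≤ z/(1-z) := by
        rw [le_div_iff₀ h1z]; linarith
      have h2 : (z/(1-z)) ^ (1-σ) ≤ (z/(1-z)) ^ (1:ℝ) :=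
        Real.rpow_le_rpow_of_exponent_le hbase (by linarith)
      rw [Real.rpow_one] at h2
      have h3 : z/(1-z) ≤ 1/m₀ := by
        rw [div_le_div_iff₀ h1z hm₀]
        nlinarith
      linarith
    have hexp : Real.exp (-(a*(z-b))) ≤ Real.exp (-(a*(M-b))) := by
      rw [Real.exp_le_exp]
      nlinarith
    have hsplit : Real.exp (-(a*(M-b))) = Real.exp (-(a*m₀)) * e1 := by
      rw [he1def, ← Real.exp_add]
      congr 1
      rw [hMb, hθdef]
      ring
    have hprod : z ^ (1-σ) / (1-z) ^ (1-σ) * Real.exp (-(a*(z-b)))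
        ≤ (1/m₀) * (Real.exp (-(a*m₀)) * e1) := by
      rw [← hsplit]
      apply mul_le_mul hratio hexp (Real.exp_pos _).le (by positivity)
    have hlast : (1/m₀) * (Real.exp (-(a*m₀)) * e1) < 1 * e1 := by
      have h4 : (1/m₀) * Real.exp (-(a*m₀)) < 1 := ha3
      have : (1/m₀) * (Real.exp (-(a*m₀)) * e1) = ((1/m₀) * Real.exp (-(a*m₀))) * e1 := by ring
      rw [this]
      exact mul_lt_mul_of_pos_right h4 he1
    rw [one_mul] at hlast
    calc F z ≤ z ^ (1-σ) / (1-z) ^ (1-σ) * Real.exp (-(a*(z-b))) := hup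
      _ ≤ (1/m₀) * (Real.exp (-(a*m₀)) * e1) := hprod
      _ < e1 := hlast
  -- C4 : F e1 < b/2
  have hC4 : F e1 < b/2 := by
    have he11 : e1 < 1/2 := by linarith [he1b8, hb2]
    have hup := LY.f_le_bound (a := a) (b := b) hσ1 ⟨he1, by linarith⟩
    have h1e : (0:ℝ) < 1 - e1 := by linarith
    have hpow : e1 ^ (1-σ) = Real.exp (-(a*θ) * (1-σ)) := by
      rw [he1def, Real.exp_mul]
    have hden : (1:ℝ)/2 ≤ (1-e1) ^ (1-σ) := by
      have h1 : ((1:ℝ)/2) ^ (1-σ) ≤ (1-e1) ^ (1-σ) := by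
        apply Real.rpow_le_rpow (by norm_num) (by linarith) (by linarith)
      have h2 : ((1:ℝ)/2) ^ (1-σ) ≥ (1:ℝ)/2 := by
        have := Real.rpow_le_rpow_of_exponent_ge (by norm_num : (0:ℝ) < 1/2)
          (by norm_num : (1:ℝ)/2 ≤ 1) (by linarith : 1-σ ≤ 1)
        rw [Real.rpow_one] at this
        exact this
      linarith
    have hfrac : e1 ^ (1-σ) / (1-e1) ^ (1-σ) ≤ 2 * Real.exp (-(a*θ) * (1-σ)) := by
      rw [hpow]
      rw [div_le_iff₀ (by positivity)]
      have h3 : 2 * Real.exp (-(a*θ)*(1-σ)) * (1-e1)^(1-σ) ≥ 2 * Real.exp (-(a*θ)*(1-σ)) * (1/2) := by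
        apply mul_le_mul_of_nonneg_left hden (by positivity)
      nlinarith [Real.exp_pos (-(a*θ)*(1-σ))]
    have hexp2 : Real.exp (-(a*(e1-b))) ≤ Real.exp (a*b) := by
      rw [Real.exp_le_exp]
      nlinarith
    have hcomb : F e1 ≤ 2 * Real.exp (-(a*θ)*(1-σ)) * Real.exp (a*b) := by
      calc F e1 ≤ e1 ^ (1-σ) / (1-e1) ^ (1-σ) * Real.exp (-(a*(e1-b))) := hup
        _ ≤ (2 * Real.exp (-(a*θ)*(1-σ))) * Real.exp (a*b) := by
            apply mul_le_mul hfrac hexp2 (Real.exp_pos _).le (by positivity)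
    have hid : 2 * Real.exp (-(a*θ)*(1-σ)) * Real.exp (a*b) = 2 * Real.exp (-(a*((1-σ)*m₀))) := by
      rw [mul_assoc, ← Real.exp_add]
      congr 2
      have : -(a*θ)*(1-σ) = -(a * (θ*(1-σ))) := by ring
      rw [this, hθσ]
      ring
    rw [hid] at hcomb
    linarith [ha4]
  -- continuity and interval facts
  have hcont : ContinuousOn F (Icc 0 1) := LY.f_cont hσ1
  have h34 : (0:ℝ) < 3*b/4 := by linarith
  have h341 : 3*b/4 < 1 - m₀ := by rw [hm₀def]; nlinarith
  have hM1m : M ≤ 1 - m₀ := by rw [hMdef]; linarith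
  have hsubE : Icc (3*b/4) (1-m₀) ⊆ Icc (0:ℝ) 1 :=
    Icc_subset_Icc (by linarith) (by linarith)
  -- fixed point
  have hgcont : ContinuousOn (fun x => F x - x) (Icc (3*b/4) (1-m₀)) :=
    (hcont.mono hsubE).sub continuousOn_id
  have hF34 : M < F (3*b/4) := hC2 _ (by linarith) le_rfl
  have hF1m : F (1-m₀) < e1 := hC3 _ hM1m le_rfl
  obtain ⟨xs, hxsmem, hxs0⟩ : ∃ xs ∈ Icc (3*b/4) (1-m₀), F xs - xs = 0 := by
    have hiv := intermediate_value_Icc' (le_of_lt h341) hgcont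
    have h0mem : (0:ℝ) ∈ Icc (F (1-m₀) - (1-m₀)) (F (3*b/4) - 3*b/4) := by
      constructor
      · have : e1 < 1 - m₀ := by linarith [he1b8, hm₀4, hb2]
        linarith
      · linarith
    obtain ⟨xs, hxs, hval⟩ := hiv h0mem
    exact ⟨xs, hxs, hval⟩
  have hfix : F xs = xs := by linarith [hxs0]
  have hxs34 : 3*b/4 < xs := by
    rcases eq_or_lt_of_le hxsmem.1 with h | h
    · exfalso
      rw [← h] at hfix
      linarith [hF34]
    · exact h
  have hxsM : xs < M := by
    by_contra h
    push_neg at h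
    have h2 := hC3 xs h hxsmem.2
    rw [hfix] at h2
    linarith [he1b8, hb2]
  have hxs1 : xs < 1 := by linarith [hxsmem.2, hm₀]
  -- strict antitonicity
  have ha1' : (1-σ)*(1/(b/2) + 1/(1-(1-m₀))) < a := by
    have h : 1-(1-m₀) = m₀ := by ring
    rw [h]
    exact ha1
  have hanti : StrictAntiOn F (Icc (b/2) (1-m₀)) :=
    anti_lemma ⟨hσ0, hσ1⟩ (by positivity) (by linarith) ha1'
  -- w1
  obtain ⟨w1, hw1mem, hw1val⟩ : ∃ w1 ∈ Icc (3*b/4) xs, F w1 = M := by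
    have hc' : ContinuousOn F (Icc (3*b/4) xs) :=
      hcont.mono (Icc_subset_Icc (by linarith) (by linarith))
    apply intermediate_value_Icc' (le_of_lt hxs34) hc'
    rw [hfix]
    exact ⟨hxsM.le, hF34.le⟩
  have hw1xs : w1 < xs := by
    rcases eq_or_lt_of_le hw1mem.2 with h | h
    · exfalso
      rw [h, hfix] at hw1val
      linarith
    · exact h
  -- w2p
  obtain ⟨w2p, hw2pmem, hw2pval⟩ : ∃ w ∈ Icc xs (1-m₀), F w = b/8 := by
    have hc' : ContinuousOn F (Icc xs (1-m₀)) :=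
      hcont.mono (Icc_subset_Icc (by linarith) (by linarith))
    apply intermediate_value_Icc' hxsmem.2 hc'
    constructor
    · linarith [hF1m, he1b8]
    · rw [hfix]
      linarith
  have hxsw2p : xs < w2p := by
    rcases eq_or_lt_of_le hw2pmem.1 with h | h
    · exfalso
      rw [← h, hfix] at hw2pval
      linarith
    · exact h
  -- w2
  obtain ⟨w2, hw2mem, hw2val⟩ : ∃ w ∈ Icc xs M, F w = e1 := by
    have hc' : ContinuousOn F (Icc xs M) :=
      hcont.mono (Icc_subset_Icc (by linarith) (by linarith))
    apply intermediate_value_Icc' hxsM.le hc'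
    constructor
    · exact (hC3 M le_rfl hM1m).le
    · rw [hfix]
      linarith [he1b8]
  have hw2pw2 : w2p ≤ w2 := by
    by_contra h
    push_neg at h
    have h2 := hanti ⟨by linarith [hw2mem.1], by linarith [hw2mem.2]⟩
      ⟨by linarith [hw2pmem.1], hw2pmem.2⟩ h
    rw [hw2val, hw2pval] at h2
    linarith [he1b8]
  -- log fixed point identity
  have hfixlog : a*(xs-b) = σ*(Real.log (1-xs) - Real.log xs) :=
    fix_log ⟨hσ0, hσ1⟩ ⟨by linarith, hxs1⟩ hfix
  have hxsM' : xs ≤ 1 - 2*m₀ := by rw [← hMdef]; exact hxsM.le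
  -- assemble the Setup
  exact ⟨⟨e1, w1, xs, w2p, w2, M, hσ1, hb0, hb2, he1,
    by linarith [he1b8],
    hw1mem.1, hw1xs, hxsw2p, hw2pw2, hw2mem.2, hM1,
    (hanti.antitoneOn).mono (Icc_subset_Icc (by linarith [hw1mem.1]) hw2pmem.2),
    hw1val, hw2pval, hw2val, hfix,
    by linarith [hC4, hw1mem.1],
    by linarith [hC2 (b/2) le_rfl (by linarith), hw2mem.2],
    expand1_lemma ⟨hσ0, hσ1⟩ hb0 hw1mem.1 hw1xs hxsw2p hw2pmem.2 hxsM' hm₀ hfixlog ha6,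
    expand2_lemma ⟨hσ0, hσ1⟩ hb0 hw1mem.1 hw1xs hxsw2p hw2pmem.2 hxsM' hm₀ hfixlog ha6⟩⟩

end LY5

namespace LY6
open LY LY2 LY3 LY4 LY5

variable {a b σ : ℝ}

lemma main_case (hσ : σ ∈ Ioo (0:ℝ) 1) (hb : b ∈ Ioo (0:ℝ) 1)
    (hcase : b * (2-σ) < 1-σ) :
    ∃ a₁ > (0:ℝ), ∀ a > a₁,
      ∃ S : Set ℝ, S ⊆ Set.Icc 0 1 ∧ ¬S.Countable ∧
        ∀ x ∈ S, ∀ y ∈ S, x ≠ y →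
          Filter.liminf (fun n => |(f a b σ)^[n] x - (f a b σ)^[n] y|) Filter.atTop = 0 ∧
          0 < Filter.limsup (fun n => |(f a b σ)^[n] x - (f a b σ)^[n] y|) Filter.atTop := by
  obtain ⟨a₀, ha₀⟩ := eventually_atTop.1 (setup_exists hσ hb hcase)
  refine ⟨max a₀ 1, lt_of_lt_of_le one_pos (le_max_right _ _), fun a ha => ?_⟩
  obtain ⟨S⟩ := ha₀ a (le_of_lt (lt_of_le_of_lt (le_max_left _ _) ha))
  exact LY4.dyn S

lemma conj (hσ1 : σ < 1) (a : ℝ) {y : ℝ} (hy : y ∈ Icc (0:ℝ) 1) :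
    f a b σ (1-y) = 1 - f a (1-b) σ y := by
  have hd2 := LY.den_pos (a := a) (b := 1-b) hσ1 hy
  rw [f, f]
  have hsub : (1:ℝ) - (1-y) = y := by ring
  rw [hsub]
  have hd1' : 0 < (1-y)^(1-σ) + y^(1-σ) * Real.exp (a*((1-y)-b)) := by
    rcases lt_or_eq_of_le hy.2 with h | h
    · have h1 : 0 < (1-y)^(1-σ) := Real.rpow_pos_of_pos (by linarith) _
      have h2 : 0 ≤ y^(1-σ) * Real.exp (a*((1-y)-b)) := by
        apply mul_nonneg (Real.rpow_nonneg hy.1 _) (Real.exp_pos _).le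
      linarith
    · subst h
      simp only [sub_self, Real.zero_rpow (by linarith : (1:ℝ)-σ ≠ 0), zero_add,
        Real.one_rpow, one_mul]
      exact Real.exp_pos _
  have key : Real.exp (a*((1-y)-b)) * Real.exp (a*(y-(1-b))) = 1 := by
    rw [← Real.exp_add]
    have : a*((1-y)-b) + a*(y-(1-b)) = 0 := by ring
    rw [this, Real.exp_zero]
  have h2 : 1 - y^(1-σ)/(y^(1-σ) + (1-y)^(1-σ) * Real.exp (a*(y-(1-b))))
      = (1-y)^(1-σ) * Real.exp (a*(y-(1-b))) / (y^(1-σ) + (1-y)^(1-σ) * Real.exp (a*(y-(1-b)))) := by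
    field_simp
    ring
  rw [h2, div_eq_div_iff hd1'.ne' hd2.ne']
  linear_combination (-((1-y)^(1-σ) * y^(1-σ))) * key

lemma conj_iter (hσ1 : σ < 1) (a : ℝ) {y : ℝ} (hy : y ∈ Icc (0:ℝ) 1) (n : ℕ) :
    (f a b σ)^[n] (1-y) = 1 - (f a (1-b) σ)^[n] y := by
  induction n with
  | zero => simp
  | succ n ih =>
    rw [Function.iterate_succ_apply', Function.iterate_succ_apply', ih]
    exact conj hσ1 a ((LY.f_mapsTo hσ1).iterate n hy)

end LY6

/-- Li–Yorke chaos for `f_{a,b,σ}` for sufficiently large intensity of choice when the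
asymmetry of costs is substantial: there is an uncountable scrambled set in `[0,1]`. -/
theorem li_yorke_chaos (σ b : ℝ) (hσ : σ ∈ Set.Ioo (0:ℝ) 1)
    (hb : b ∈ Set.Ioo (0:ℝ) 1)
    (hcond : (b ≤ 1/2 ∧ b < (1 - σ) / (2 - σ)) ∨ (1/2 ≤ b ∧ 1 / (2 - σ) < b)) :
    ∃ a₁ > (0:ℝ), ∀ a > a₁,
      ∃ S : Set ℝ, S ⊆ Set.Icc 0 1 ∧ ¬S.Countable ∧
        ∀ x ∈ S, ∀ y ∈ S, x ≠ y →
          Filter.liminf (fun n => |(f a b σ)^[n] x - (f a b σ)^[n] y|)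
            Filter.atTop = 0 ∧
          0 < Filter.limsup (fun n => |(f a b σ)^[n] x - (f a b σ)^[n] y|)
            Filter.atTop := by
  obtain ⟨hσ0, hσ1⟩ := hσ
  obtain ⟨hb0, hb1⟩ := hb
  have h2σ : (0:ℝ) < 2 - σ := by linarith
  rcases hcond with ⟨-, h⟩ | ⟨-, h⟩
  · have hcase : b * (2-σ) < 1-σ := by
      rw [lt_div_iff₀ h2σ] at h
      linarith
    exact LY6.main_case ⟨hσ0, hσ1⟩ ⟨hb0, hb1⟩ hcase
  · have hb' : (1-b) ∈ Set.Ioo (0:ℝ) 1 := ⟨by linarith, by linarith⟩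
    have hcase : (1-b) * (2-σ) < 1-σ := by
      have h' : 1 < b*(2-σ) := by
        rw [div_lt_iff₀ h2σ] at h
        linarith
      nlinarith [h']
    obtain ⟨a₁, ha₁pos, ha₁⟩ := LY6.main_case ⟨hσ0, hσ1⟩ hb' hcase
    refine ⟨a₁, ha₁pos, fun a ha => ?_⟩
    obtain ⟨T, hT1, hT2, hT3⟩ := ha₁ a ha
    have hbb : 1 - (1 - b) = b := by ring
    refine ⟨(fun y => 1 - y) '' T, ?_, ?_, ?_⟩
    · rintro x ⟨y, hy, rfl⟩
      have h' := hT1 hy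
      show (1 - y) ∈ Set.Icc (0:ℝ) 1
      exact ⟨by linarith [h'.2], by linarith [h'.1]⟩
    · intro hc
      apply hT2
      have himg : (fun y : ℝ => 1 - y) '' ((fun y : ℝ => 1 - y) '' T) = T := by
        rw [Set.image_image]
        simp
      rw [← himg]
      exact hc.image _
    · rintro x ⟨yx, hyx, rfl⟩ y' ⟨yy, hyy, rfl⟩ hne
      have hne' : yx ≠ yy := fun h' => hne (by rw [h'])
      have hmx : yx ∈ Set.Icc (0:ℝ) 1 := hT1 hyx
      have hmy : yy ∈ Set.Icc (0:ℝ) 1 := hT1 hyy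
      obtain ⟨hli, hls⟩ := hT3 yx hyx yy hyy hne'
      have hfun : (fun n => |(f a b σ)^[n] (1-yx) - (f a b σ)^[n] (1-yy)|)
          = (fun n => |(f a (1-b) σ)^[n] yx - (f a (1-b) σ)^[n] yy|) := by
        funext n
        have e1 := LY6.conj_iter (b := b) hσ1 a hmx n
        have e2 := LY6.conj_iter (b := b) hσ1 a hmy n
        rw [e1, e2]
        have : (1 - (f a (1-b) σ)^[n] yx) - (1 - (f a (1-b) σ)^[n] yy)
            = -((f a (1-b) σ)^[n] yx - (f a (1-b) σ)^[n] yy) := by ring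
        rw [this, abs_neg]
      rw [hfun]
      exact ⟨hli, hls⟩
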